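/- arXiv:2604.23037 — 5 statements merged into one kernel-verified Lean document; each statement's English description precedes it below -/
import Mathlib

section
/- A connected k-regular simple graph whose adjacency matrix has exactly three distinct eigenvalues is strongly regular. -/
open Matrix SimpleGraph

set_option linter.unusedSectionVars false

section aux
variable {V : Type*} [Fintype V] [DecidableEq V]

lemma eig_const' {V : Type*} [Fintype V] [DecidableEq V] {G : SimpleGraph V}
    [DecidableRel G.Adj] {k : ℕ} (hc : G.Connected) (hreg : G.IsRegularOfDegree k)
    {x : V → ℝ} (hx : G.adjMatrix ℝ *ᵥ x = (k : ℝ) • x) (u v : V) : x u = x v := by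
  have hne : Nonempty V := hc.nonempty
  obtain ⟨w, hw⟩ := Finite.exists_max x
  have step : ∀ p q : V, G.Adj p q → x p = x w → x q = x w := by
    intro p q hpq hp
    have h1 : (∑ u ∈ G.neighborFinset p, x u) = (k : ℝ) * x p := by
      have := congrFun hx p
      simpa using this
    have hle : ∀ u ∈ G.neighborFinset p, x u ≤ x w := fun u _ => hw u
    have hsum : (∑ u ∈ G.neighborFinset p, x u) = ∑ u ∈ G.neighborFinset p, x w := by
      rw [h1, Finset.sum_const, hp, G.card_neighborFinset_eq_degree, hreg p, nsmul_eq_mul]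
    exact (Finset.sum_eq_sum_iff_of_le hle).1 hsum q (by rwa [mem_neighborFinset])
  have aux : ∀ (a b : V) (wk : G.Walk a b), x a = x w → x b = x w := by
    intro a b wk
    induction wk with
    | nil => exact id
    | cons h q ih => exact fun ha => ih (step _ _ h ha)
  have main : ∀ p, x p = x w := fun p => (hc.preconnected w p).elim fun wk => aux _ _ wk rfl
  rw [main u, main v]


lemma adj_herm {V : Type*} [Fintype V] [DecidableEq V] (G : SimpleGraph V)
    [DecidableRel G.Adj] : (G.adjMatrix ℝ).IsHermitian := by
  unfold Matrix.IsHermitian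
  ext i j
  simp [Matrix.conjTranspose_apply, adj_comm]

lemma eigs_hasEigenvalue {V : Type*} [Fintype V] [DecidableEq V] {A : Matrix V V ℝ}
    (hA : A.IsHermitian) (i : V) :
    Module.End.HasEigenvalue (Matrix.toLin' A) (hA.eigenvalues i) := by
  apply Module.End.hasEigenvalue_of_hasEigenvector (x := ⇑(hA.eigenvectorBasis i))
  constructor
  · rw [Module.End.mem_eigenspace_iff, Matrix.toLin'_apply, hA.mulVec_eigenvectorBasis]
  · intro h
    have := (hA.eigenvectorBasis).toBasis.ne_zero i
    apply this
    ext j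
    exact congrFun h j

lemma poly_vanish {V : Type*} [Fintype V] [DecidableEq V] {A : Matrix V V ℝ}
    (hA : A.IsHermitian) (a b c : ℝ) (h : ∀ i, hA.eigenvalues i ∈ ({a, b, c} : Set ℝ)) :
    (A - a • 1) * (A - b • 1) * (A - c • 1) = 0 := by
  set U : Matrix V V ℝ := (hA.eigenvectorUnitary : Matrix V V ℝ)
  have hUU : U * star U = 1 := (Matrix.mem_unitaryGroup_iff).mp hA.eigenvectorUnitary.2
  have hUU' : star U * U = 1 := (Matrix.mem_unitaryGroup_iff').mp hA.eigenvectorUnitary.2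
  set D : Matrix V V ℝ := Matrix.diagonal (RCLike.ofReal ∘ hA.eigenvalues)
  have hspec : A = U * D * star U := hA.spectral_theorem
  have conj : ∀ t : ℝ, A - t • 1 = U * (D - t • 1) * star U := by
    intro t
    rw [Matrix.mul_sub, Matrix.sub_mul, hspec]
    congr 1
    rw [Matrix.mul_smul, Matrix.smul_mul, mul_one, hUU]
  rw [conj a, conj b, conj c]
  have key : (D - a • 1) * ((star U * U) * (D - b • 1)) * ((star U * U) * (D - c • 1)) = 0 := by
    rw [hUU', one_mul, one_mul]
    have : ∀ t : ℝ, D - t • 1 = Matrix.diagonal (fun i => hA.eigenvalues i - t) := by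
      intro t
      rw [Matrix.smul_one_eq_diagonal, Matrix.diagonal_sub]
      rfl
    rw [this a, this b, this c, Matrix.diagonal_mul_diagonal, Matrix.diagonal_mul_diagonal]
    have hz : (fun i => (hA.eigenvalues i - a) * (hA.eigenvalues i - b) * (hA.eigenvalues i - c)) = fun _ => (0:ℝ) := by
      funext i
      rcases h i with h' | h' | h' <;> rw [h'] <;> ring
    rw [hz, Matrix.diagonal_zero]
  calc U * (D - a • 1) * star U * (U * (D - b • 1) * star U) * (U * (D - c • 1) * star U)
      = U * ((D - a • 1) * ((star U * U) * (D - b • 1)) * ((star U * U) * (D - c • 1))) * star U := by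
        noncomm_ring
    _ = 0 := by rw [key]; simp


lemma k_eig {V : Type*} [Fintype V] [DecidableEq V] (G : SimpleGraph V)
    [DecidableRel G.Adj] {k : ℕ} [Nonempty V] (hreg : G.IsRegularOfDegree k) :
    Module.End.HasEigenvalue (Matrix.toLin' (G.adjMatrix ℝ)) (k : ℝ) := by
  apply Module.End.hasEigenvalue_of_hasEigenvector (x := fun _ : V => (1 : ℝ))
  constructor
  · rw [Module.End.mem_eigenspace_iff, Matrix.toLin'_apply]
    funext v
    have := adjMatrix_mulVec_const_apply_of_regular (α := ℝ) (a := (1:ℝ)) hreg (v := v)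
    simpa using this
  · intro h
    have := congrFun h (Classical.arbitrary V)
    simp at this

lemma card_common {V : Type*} [Fintype V] [DecidableEq V] (G : SimpleGraph V)
    [DecidableRel G.Adj] (u v : V) :
    ((Fintype.card (G.commonNeighbors u v) : ℝ)) =
      (G.adjMatrix ℝ * G.adjMatrix ℝ) u v := by
  rw [adjMatrix_mul_apply]
  have h1 : ∑ w ∈ G.neighborFinset u, G.adjMatrix ℝ w v
      = ((G.neighborFinset u).filter (fun w => G.Adj w v)).card := by
    rw [Finset.card_filter]
    push_cast
    apply Finset.sum_congr rfl
    intro w _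
    by_cases h : G.Adj w v <;> simp [h]
  rw [h1]
  congr 1
  rw [Fintype.card_eq_nat_card, Nat.card_eq_card_toFinset]
  congr 1
  ext w
  simp [mem_commonNeighbors, adj_comm]

lemma key_srg (G : SimpleGraph V) [DecidableRel G.Adj] {k : ℕ}
    (hc : G.Connected) (hreg : G.IsRegularOfDegree k) (hne : G ≠ ⊥) (hnc : G ≠ ⊤)
    (r s : ℝ)
    (heig : ∀ τ : ℝ, Module.End.HasEigenvalue (Matrix.toLin' (G.adjMatrix ℝ)) τ →
      τ ∈ ({(k : ℝ), r, s} : Set ℝ)) :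
    ∃ ℓ μ : ℕ, G.IsSRGWith (Fintype.card V) k ℓ μ := by
  set A : Matrix V V ℝ := G.adjMatrix ℝ with hAdef
  have hA : A.IsHermitian := adj_herm G
  have hmem : ∀ i, hA.eigenvalues i ∈ ({(k : ℝ), r, s} : Set ℝ) :=
    fun i => heig _ (eigs_hasEigenvalue hA i)
  have hcubic : (A - (k : ℝ) • 1) * (A - r • 1) * (A - s • 1) = 0 :=
    poly_vanish hA _ _ _ hmem
  set M : Matrix V V ℝ := (A - r • 1) * (A - s • 1) with hMdef
  have h0 : (A - (k : ℝ) • 1) * M = 0 := by rw [hMdef, ← mul_assoc]; exact hcubic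
  -- expansion of M
  have hMexp : ∀ u v, M u v = (A * A) u v - r * A u v - s * A u v
      + r * s * (1 : Matrix V V ℝ) u v := by
    intro u v
    have : M = A * A - s • A - r • A + (r * s) • 1 := by
      rw [hMdef]
      simp only [Matrix.sub_mul, Matrix.mul_sub, smul_sub, Matrix.smul_mul, Matrix.mul_smul,
        one_mul, mul_one, smul_smul, mul_comm s r]
      abel
    rw [this]
    simp [Matrix.sub_apply, Matrix.add_apply, Matrix.smul_apply]
    ring
  -- columns of M are constant
  have hcol : ∀ j u u', M u j = M u' j := by
    intro j u u'
    have hx : A *ᵥ (fun i => M i j) = (k : ℝ) • (fun i => M i j) := by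
      funext i
      have h1 : ((A - (k : ℝ) • 1) * M) i j = 0 := by rw [h0]; rfl
      rw [Matrix.sub_mul, Matrix.sub_apply, Matrix.smul_mul, one_mul,
        Matrix.smul_apply, sub_eq_zero] at h1
      have h2 : (A * M) i j = (A *ᵥ fun i => M i j) i := by
        rw [Matrix.mul_apply, Matrix.mulVec, dotProduct]
      rw [← h2, h1]
      rfl
    exact eig_const' hc hreg hx u u'
  -- M is symmetric
  have hsym : ∀ u v, M u v = M v u := by
    intro u v
    have hAA : (A * A)ᵀ = A * A := by
      rw [Matrix.transpose_mul, (isSymm_adjMatrix G).eq]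
    have hAs : A v u = A u v := by
      simp [hAdef, adj_comm]
    rw [hMexp u v, hMexp v u, hAs, ← Matrix.transpose_apply (A * A) v u, hAA,
      Matrix.one_apply, Matrix.one_apply]
    by_cases h : u = v <;> simp [h, eq_comm]
  have hconst : ∀ u v u' v', M u v = M u' v' := by
    intro u v u' v'
    rw [hcol v u u', hsym u' v, hcol u' v v', hsym v' u']
  -- find an adjacent pair and a nonadjacent pair
  have hadj : ∃ u v, G.Adj u v := by
    by_contra h
    push_neg at h
    exact hne (by ext u v; simp [h u v])
  have hnadj : ∃ u v, u ≠ v ∧ ¬G.Adj u v := by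
    by_contra h
    push_neg at h
    exact hnc (by ext u v; simp only [top_adj]; exact ⟨fun h' => h'.ne, fun h' => h u v h'⟩)
  obtain ⟨u₀, v₀, huv⟩ := hadj
  obtain ⟨w₀, x₀, hwx, hnwx⟩ := hnadj
  refine ⟨Fintype.card (G.commonNeighbors u₀ v₀), Fintype.card (G.commonNeighbors w₀ x₀),
    rfl, hreg, ?_, ?_⟩
  · intro p q hpq
    have h1 : ((Fintype.card (G.commonNeighbors p q) : ℝ))
        = (Fintype.card (G.commonNeighbors u₀ v₀) : ℝ) := by
      rw [card_common, card_common]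
      have e1 : ∀ a b : V, G.Adj a b → (A * A) a b = M a b + r + s := by
        intro a b hab
        rw [hMexp a b]
        have : A a b = 1 := by simp [hAdef, hab]
        rw [this, Matrix.one_apply_ne hab.ne]
        ring
      rw [e1 _ _ hpq, e1 _ _ huv, hconst p q u₀ v₀]
    exact_mod_cast h1
  · intro p q hpq hnpq
    have h1 : ((Fintype.card (G.commonNeighbors p q) : ℝ))
        = (Fintype.card (G.commonNeighbors w₀ x₀) : ℝ) := by
      rw [card_common, card_common]
      have e1 : ∀ a b : V, a ≠ b → ¬G.Adj a b → (A * A) a b = M a b := by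
        intro a b hab hnab
        rw [hMexp a b]
        have : A a b = 0 := by simp [hAdef, hnab]
        rw [this, Matrix.one_apply_ne hab]
        ring
      rw [e1 _ _ hpq hnpq, e1 _ _ hwx hnwx, hconst p q w₀ x₀]
    exact_mod_cast h1

end aux

/-- A connected `k`-regular simple graph (neither complete nor empty) whose adjacency matrix
has exactly three distinct eigenvalues is strongly regular. -/
theorem srg_of_three_eigenvalues {V : Type*} [Fintype V] [DecidableEq V]
    (G : SimpleGraph V) [DecidableRel G.Adj] {k : ℕ}
    (hc : G.Connected) (hreg : G.IsRegularOfDegree k) (hne : G ≠ ⊥) (hnc : G ≠ ⊤)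
    (a b c : ℝ) (hab : a ≠ b) (hbc : b ≠ c) (hac : a ≠ c)
    (hspec : {τ : ℝ | Module.End.HasEigenvalue (Matrix.toLin' (G.adjMatrix ℝ)) τ} = {a, b, c}) :
    ∃ ℓ μ : ℕ, G.IsSRGWith (Fintype.card V) k ℓ μ := by
  haveI : Nonempty V := hc.nonempty
  have hk : (k : ℝ) ∈ ({a, b, c} : Set ℝ) := by
    rw [← hspec]
    exact k_eig G hreg
  have hsub : ∀ τ : ℝ, Module.End.HasEigenvalue (Matrix.toLin' (G.adjMatrix ℝ)) τ →
      τ ∈ ({a, b, c} : Set ℝ) := by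
    intro τ hτ
    rw [← hspec]
    exact hτ
  rcases hk with h | h | h
  · refine key_srg G hc hreg hne hnc b c fun τ hτ => ?_
    have := hsub τ hτ
    simp only [Set.mem_insert_iff, Set.mem_singleton_iff] at this ⊢
    rw [h]; tauto
  · refine key_srg G hc hreg hne hnc a c fun τ hτ => ?_
    have := hsub τ hτ
    simp only [Set.mem_insert_iff, Set.mem_singleton_iff] at this ⊢
    rw [h]; tauto
  · refine key_srg G hc hreg hne hnc a b fun τ hτ => ?_
    have := hsub τ hτ
    simp only [Set.mem_insert_iff, Set.mem_singleton_iff] at this ⊢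
    rw [h]; tauto
end

section
/- Let G be a simple graph on 99 vertices in which every pair of adjacent vertices has exactly 1 common neighbor and every pair of non-adjacent vertices has exactly 2 common neighbors. Then G is 14-regular, hence a (99,14,1,2) strongly regular graph. -/
open Finset

lemma card_common_eq {V : Type*} [Fintype V] [DecidableEq V] (G : SimpleGraph V) [DecidableRel G.Adj]
    (u w : V) : Fintype.card (G.commonNeighbors u w)
      = (G.neighborFinset u ∩ G.neighborFinset w).card := by
  classical
  rw [← Set.toFinset_card]
  congr 1
  ext x
  simp [SimpleGraph.mem_commonNeighbors]

/-- A simple graph on 99 vertices in which adjacent vertices have exactly 1 common neighbor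
and non-adjacent vertices have exactly 2 common neighbors is 14-regular, hence a
`(99, 14, 1, 2)` strongly regular graph. -/
theorem conway99_regularity {V : Type*} [Fintype V]
    (G : SimpleGraph V) [DecidableRel G.Adj] (hcard : Fintype.card V = 99)
    (hadj : ∀ u v : V, G.Adj u v → Fintype.card (G.commonNeighbors u v) = 1)
    (hnadj : ∀ u v : V, u ≠ v → ¬G.Adj u v → Fintype.card (G.commonNeighbors u v) = 2) :
    G.IsRegularOfDegree 14 ∧ G.IsSRGWith 99 14 1 2 := by
  classical
  have fact1 : ∀ u w : V, G.Adj u w →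
      (G.neighborFinset u ∩ G.neighborFinset w).card = 1 := by
    intro u w h; rw [← card_common_eq]; exact hadj u w h
  have fact2 : ∀ u w : V, u ≠ w → ¬G.Adj u w →
      (G.neighborFinset u ∩ G.neighborFinset w).card = 2 := by
    intro u w h h'; rw [← card_common_eq]; exact hnadj u w h h'
  have hreg : G.IsRegularOfDegree 14 := by
    intro v
    set N := G.neighborFinset v with hN
    have hNcard : N.card = G.degree v := rfl
    set d := G.degree v with hd
    set A := (Finset.univ : Finset V) \ insert v N with hA
    have hvN : v ∉ N := by simp [hN]
    have hNmem : ∀ u, u ∈ N ↔ G.Adj v u := by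
      intro u; simp [hN]
    have hAmem : ∀ w, w ∈ A ↔ w ≠ v ∧ ¬G.Adj v w := by
      intro w; simp [hA, hN, not_or]
    have hdle : d + 1 ≤ 99 := by
      have h := Finset.card_le_univ (insert v N)
      rwa [Finset.card_insert_of_notMem hvN, hNcard, hcard] at h
    have hAcard : A.card = 99 - (d + 1) := by
      rw [hA, Finset.card_sdiff_of_subset (Finset.subset_univ _), Finset.card_insert_of_notMem hvN,
        hNcard, Finset.card_univ, hcard]
    -- double counting of triples (u1, u2, w) : u1 ≠ u2 ∈ N, w ∈ A adjacent to both
    have key : (∑ p ∈ N ×ˢ N, ∑ w ∈ A,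
          (if p.1 ≠ p.2 ∧ G.Adj p.1 w ∧ G.Adj p.2 w then 1 else 0))
        = ∑ w ∈ A, ∑ p ∈ N ×ˢ N,
          (if p.1 ≠ p.2 ∧ G.Adj p.1 w ∧ G.Adj p.2 w then 1 else 0) :=
      Finset.sum_comm
    -- RHS: each w ∈ A contributes 2
    have hrhs : ∀ w ∈ A, (∑ p ∈ N ×ˢ N,
        (if p.1 ≠ p.2 ∧ G.Adj p.1 w ∧ G.Adj p.2 w then 1 else 0)) = 2 := by
      intro w hw
      rw [hAmem] at hw
      have hC : (N ∩ G.neighborFinset w).card = 2 := by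
        rw [hN]; exact fact2 v w (Ne.symm hw.1) hw.2
      rw [← Finset.card_filter]
      have heq : ((N ×ˢ N).filter fun p => p.1 ≠ p.2 ∧ G.Adj p.1 w ∧ G.Adj p.2 w)
          = (N ∩ G.neighborFinset w).offDiag := by
        ext ⟨a, b⟩
        simp only [Finset.mem_filter, Finset.mem_product, Finset.mem_offDiag,
          Finset.mem_inter, SimpleGraph.mem_neighborFinset]
        rw [G.adj_comm w a, G.adj_comm w b]
        tauto
      rw [heq, Finset.offDiag_card, hC]
    -- LHS inner sums
    have hlhs : ∀ p ∈ N ×ˢ N, (∑ w ∈ A,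
        (if p.1 ≠ p.2 ∧ G.Adj p.1 w ∧ G.Adj p.2 w then 1 else 0))
        = if p.1 ≠ p.2 ∧ ¬G.Adj p.1 p.2 then 1 else 0 := by
      rintro ⟨u1, u2⟩ hp
      rw [Finset.mem_product] at hp
      obtain ⟨hu1, hu2⟩ := hp
      rw [hNmem] at hu1 hu2
      rw [← Finset.card_filter]
      dsimp only
      by_cases h12 : u1 = u2
      · simp [h12]
      by_cases ha : G.Adj u1 u2
      · rw [if_neg (by tauto)]
        rw [Finset.card_eq_zero, Finset.filter_eq_empty_iff]
        rintro w hw ⟨-, hw1, hw2⟩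
        rw [hAmem] at hw
        have h1 : (G.neighborFinset u1 ∩ G.neighborFinset u2).card = 1 := fact1 u1 u2 ha
        have hsub : ({v, w} : Finset V) ⊆ G.neighborFinset u1 ∩ G.neighborFinset u2 := by
          intro x hx
          simp only [Finset.mem_insert, Finset.mem_singleton] at hx
          rcases hx with rfl | rfl
          · simp [SimpleGraph.mem_neighborFinset, hu1.symm, hu2.symm]
          · simp [SimpleGraph.mem_neighborFinset, hw1, hw2]
        have hle := Finset.card_le_card hsub
        rw [Finset.card_insert_of_notMem (by simp [Ne.symm hw.1]), Finset.card_singleton,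
          h1] at hle
        omega
      · rw [if_pos ⟨h12, ha⟩]
        have h2 : (G.neighborFinset u1 ∩ G.neighborFinset u2).card = 2 := fact2 u1 u2 h12 ha
        have heq : (A.filter fun w => u1 ≠ u2 ∧ G.Adj u1 w ∧ G.Adj u2 w)
            = (G.neighborFinset u1 ∩ G.neighborFinset u2).erase v := by
          ext w
          simp only [Finset.mem_filter, Finset.mem_erase, Finset.mem_inter,
            SimpleGraph.mem_neighborFinset, hAmem]
          constructor
          · rintro ⟨⟨hwv, -⟩, -, h1', h2'⟩; exact ⟨hwv, h1', h2'⟩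
          · rintro ⟨hwv, h1', h2'⟩
            refine ⟨⟨hwv, ?_⟩, h12, h1', h2'⟩
            intro hvw
            have h1c : (G.neighborFinset v ∩ G.neighborFinset w).card = 1 := fact1 v w hvw
            have hsub : ({u1, u2} : Finset V) ⊆ G.neighborFinset v ∩ G.neighborFinset w := by
              intro x hx
              simp only [Finset.mem_insert, Finset.mem_singleton] at hx
              rcases hx with rfl | rfl
              · simp [SimpleGraph.mem_neighborFinset, hu1, h1'.symm]
              · simp [SimpleGraph.mem_neighborFinset, hu2, h2'.symm]
            have hle := Finset.card_le_card hsub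
            rw [Finset.card_insert_of_notMem (by simp [h12]), Finset.card_singleton,
              h1c] at hle
            omega
        rw [heq, Finset.card_erase_of_mem (by
          simp [Finset.mem_inter, SimpleGraph.mem_neighborFinset, hu1.symm, hu2.symm]), h2]
    -- total LHS = X, the number of non-adjacent ordered pairs in N
    set X := ((N ×ˢ N).filter fun p => p.1 ≠ p.2 ∧ ¬G.Adj p.1 p.2).card with hX
    have hL : (∑ p ∈ N ×ˢ N, ∑ w ∈ A,
        (if p.1 ≠ p.2 ∧ G.Adj p.1 w ∧ G.Adj p.2 w then 1 else 0)) = X := by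
      rw [Finset.sum_congr rfl hlhs, hX, Finset.card_filter]
    have hR : (∑ w ∈ A, ∑ p ∈ N ×ˢ N,
        (if p.1 ≠ p.2 ∧ G.Adj p.1 w ∧ G.Adj p.2 w then 1 else 0)) = 2 * A.card := by
      rw [Finset.sum_congr rfl hrhs, Finset.sum_const, smul_eq_mul, mul_comm]
    have hXA : X = 2 * (99 - (d + 1)) := by rw [← hAcard, ← hR, ← key, hL]
    -- Y, the number of adjacent ordered pairs in N, equals d
    set Y := ((N ×ˢ N).filter fun p => G.Adj p.1 p.2).card with hY
    have hYd : Y = d := by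
      rw [hY, Finset.card_filter, Finset.sum_product]
      have hone : ∀ u1 ∈ N, (∑ u2 ∈ N, if G.Adj u1 u2 then 1 else 0) = 1 := by
        intro u1 hu1
        rw [← Finset.card_filter]
        have : N.filter (fun u2 => G.Adj u1 u2) = G.neighborFinset v ∩ G.neighborFinset u1 := by
          ext u2
          simp only [Finset.mem_filter, Finset.mem_inter, SimpleGraph.mem_neighborFinset, hNmem]
        rw [this, fact1 v u1 ((hNmem u1).mp hu1)]
      rw [Finset.sum_congr rfl hone, Finset.sum_const, smul_eq_mul, mul_one, hNcard]
    -- X + Y = d^2 - d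
    have hsum : X + Y = d * d - d := by
      rw [hX, hY, Finset.card_filter, Finset.card_filter, ← Finset.sum_add_distrib]
      have : ∀ p ∈ N ×ˢ N,
          ((if p.1 ≠ p.2 ∧ ¬G.Adj p.1 p.2 then 1 else 0) + (if G.Adj p.1 p.2 then 1 else 0))
          = if p.1 ≠ p.2 then 1 else 0 := by
        intro p _
        by_cases ha : G.Adj p.1 p.2
        · simp [ha, G.ne_of_adj ha]
        · by_cases h12 : p.1 = p.2 <;> simp [ha, h12]
      rw [Finset.sum_congr rfl this, ← Finset.card_filter]
      have : (N ×ˢ N).filter (fun p => p.1 ≠ p.2) = N.offDiag := by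
        ext p
        simp [Finset.mem_offDiag, Finset.mem_product, and_assoc]
      rw [this, Finset.offDiag_card, hNcard]
    have hdd : d ≤ d * d := by nlinarith
    have h196 : d * d = 196 := by omega
    have : d ≤ 98 := by omega
    interval_cases d <;> omega
  exact ⟨hreg, ⟨hcard, hreg, hadj, fun u v h => hnadj u v h⟩⟩
end

section
/- Let G be a connected simple graph in which every pair of adjacent vertices has exactly λ common neighbors and every pair of non-adjacent vertices has exactly μ common neighbors, with μ > 1. Then G is regular. -/
open Finset SimpleGraph

/-- A connected simple graph in which adjacent vertices share exactly `λ` common neighbors and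
non-adjacent vertices share exactly `μ` common neighbors, with `μ > 1`, is regular. -/
theorem regular_of_lambda_mu {V : Type*} [Fintype V]
    (G : SimpleGraph V) [DecidableRel G.Adj] {ℓ μ : ℕ} (hc : G.Connected) (hμ : 1 < μ)
    (hadj : ∀ u v : V, G.Adj u v → Fintype.card (G.commonNeighbors u v) = ℓ)
    (hnadj : ∀ u v : V, u ≠ v → ¬G.Adj u v → Fintype.card (G.commonNeighbors u v) = μ) :
    ∃ k : ℕ, G.IsRegularOfDegree k := by
  classical
  -- entries of A^2 are common-neighbor counts
  have hAA : ∀ a b : V, (G.adjMatrix ℤ * G.adjMatrix ℤ) a b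
      = (Fintype.card (G.commonNeighbors a b) : ℤ) := by
    intro a b
    rw [adjMatrix_mul_apply]
    have h2 : (G.neighborFinset a).filter (fun w => G.Adj w b)
        = (G.commonNeighbors a b).toFinset := by
      ext x
      simp [mem_commonNeighbors, adj_comm]
    have h1 : ∑ w ∈ G.neighborFinset a, G.adjMatrix ℤ w b
        = (((G.neighborFinset a).filter (fun w => G.Adj w b)).card : ℤ) := by
      simp [adjMatrix_apply, Finset.sum_boole]
    rw [h1, h2, ← Set.toFinset_card]
  -- pointwise evaluation of common-neighbor counts
  have heval : ∀ v w : V, (Fintype.card (G.commonNeighbors w v) : ℤ)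
      = (if w = v then (G.degree v : ℤ) - μ else 0)
        + (if G.Adj w v then (ℓ : ℤ) - μ else 0) + μ := by
    intro v w
    by_cases h1 : w = v
    · subst h1
      have hcc : Fintype.card (G.commonNeighbors w w) = G.degree w := by
        rw [← card_neighborSet_eq_degree]
        exact Fintype.card_congr (Equiv.setCongr (Set.inter_self _))
      simp [hcc, G.irrefl]
    · by_cases h2 : G.Adj w v
      · rw [hadj w v h2]
        simp [h1, h2]
      · rw [hnadj w v h1 h2]
        simp [h1, h2]
  -- evaluation of the row sums
  have hsum : ∀ u v : V, ∑ w ∈ G.neighborFinset u,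
        (Fintype.card (G.commonNeighbors w v) : ℤ)
      = (if G.Adj u v then (G.degree v : ℤ) - μ else 0)
        + ((ℓ : ℤ) - μ) * ((G.neighborFinset u).filter (fun w => G.Adj w v)).card
        + μ * G.degree u := by
    intro u v
    rw [Finset.sum_congr rfl (fun w _ => heval v w)]
    rw [Finset.sum_add_distrib, Finset.sum_add_distrib]
    congr 1
    · congr 1
      · rw [Finset.sum_ite_eq' (G.neighborFinset u) v
          (fun _ => (G.degree v : ℤ) - μ)]
        simp only [mem_neighborFinset]
      · rw [← Finset.sum_filter, Finset.sum_const, nsmul_eq_mul, mul_comm]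
    · rw [Finset.sum_const, nsmul_eq_mul, card_neighborFinset_eq_degree, mul_comm]
  -- the filtered cardinality is symmetric
  have hfil : ∀ u v : V, ((G.neighborFinset u).filter (fun w => G.Adj w v)).card
      = ((G.neighborFinset v).filter (fun w => G.Adj w u)).card := by
    intro u v
    congr 1
    ext x
    simp only [Finset.mem_filter, mem_neighborFinset]
    constructor
    · rintro ⟨h1, h2⟩; exact ⟨h2.symm, h1.symm⟩
    · rintro ⟨h1, h2⟩; exact ⟨h2.symm, h1.symm⟩
  -- common neighbor counts are symmetric
  have hcsymm : ∀ u v : V, (Fintype.card (G.commonNeighbors u v) : ℤ)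
      = (Fintype.card (G.commonNeighbors v u) : ℤ) := by
    intro u v
    exact congrArg Nat.cast
      (Fintype.card_congr (Equiv.setCongr (G.commonNeighbors_symm u v)))
  -- all degrees are equal
  have key : ∀ u v : V, (G.degree u : ℤ) = G.degree v := by
    intro u v
    have assoc : ∑ w ∈ G.neighborFinset u,
          (G.adjMatrix ℤ * G.adjMatrix ℤ) w v
        = ∑ w ∈ G.neighborFinset v, (G.adjMatrix ℤ * G.adjMatrix ℤ) u w := by
      rw [← adjMatrix_mul_apply, ← mul_adjMatrix_apply, ← mul_assoc]
    rw [Finset.sum_congr rfl (fun w _ => hAA w v),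
        Finset.sum_congr rfl (fun w _ => hAA u w)] at assoc
    rw [Finset.sum_congr rfl (fun w _ => hcsymm u w)] at assoc
    rw [hsum u v, hsum v u, hfil u v] at assoc
    have hμ' : (1 : ℤ) < μ := by exact_mod_cast hμ
    by_cases h : G.Adj u v
    · have h' : G.Adj v u := h.symm
      rw [if_pos h, if_pos h'] at assoc
      nlinarith [assoc]
    · have h' : ¬ G.Adj v u := fun hh => h hh.symm
      rw [if_neg h, if_neg h'] at assoc
      have : (μ : ℤ) ≠ 0 := by positivity
      nlinarith [assoc]
  obtain ⟨v0⟩ := hc.nonempty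
  refine ⟨G.degree v0, fun v => ?_⟩
  exact_mod_cast key v v0
end

section
/- Let x₁, …, x₁₁ be vectors in GF(3)⁵ such that every 4 of them are linearly independent. Then the 243 vectors {0} ∪ {±xᵢ} ∪ {±xᵢ ± xⱼ : i < j} are pairwise distinct and exhaust GF(3)⁵. -/
abbrev GolayDom : Type :=
  Unit ⊕ (Fin 11 × {a : ZMod 3 // a ≠ 0}) ⊕
      ({p : Fin 11 × Fin 11 // p.1 < p.2} × {a : ZMod 3 // a ≠ 0} × {a : ZMod 3 // a ≠ 0})

def golayCoeff : GolayDom → Fin 11 → ZMod 3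
  | .inl _ => 0
  | .inr (.inl (i, a)) => Pi.single i (a : ZMod 3)
  | .inr (.inr (p, a, b)) => Pi.single p.1.1 (a : ZMod 3) + Pi.single p.1.2 (b : ZMod 3)

lemma golayCoeff_inj : Function.Injective golayCoeff := by
  rintro (⟨⟩|⟨i,a,ha⟩|⟨⟨⟨i,j⟩,hij⟩,⟨a,ha⟩,⟨b,hb⟩⟩) (⟨⟩|⟨k,c,hc⟩|⟨⟨⟨k,l⟩,hkl⟩,⟨c,hc⟩,⟨d,hd⟩⟩) h <;>
    simp only [golayCoeff] at h
  · exact congrArg Sum.inl (Subsingleton.elim _ _)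
  · have h1 := congrFun h k
    simp [Pi.single_apply] at h1
    exact absurd h1.symm hc
  · have hkl' : k < l := hkl
    have h1 := congrFun h k
    simp [Pi.single_apply, hkl'.ne] at h1
    exact absurd h1.symm hc
  · have h1 := congrFun h i
    simp [Pi.single_apply] at h1
    exact absurd h1 ha
  · have h1 := congrFun h i
    simp only [Pi.single_apply, if_pos rfl] at h1
    rcases eq_or_ne i k with rfl | hik
    · rw [if_pos rfl] at h1; subst h1; rfl
    · rw [if_neg hik] at h1; exact absurd h1 ha
  · have hkl' : k < l := hkl
    have h1 := congrFun h k
    have h2 := congrFun h l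
    simp only [Pi.add_apply, Pi.single_apply, if_pos rfl, if_true, if_neg hkl'.ne, if_neg hkl'.ne',
      add_zero, zero_add] at h1 h2
    rcases eq_or_ne k i with rfl | hk
    · rcases eq_or_ne l k with rfl | hl
      · exact absurd rfl hkl'.ne
      · rw [if_neg hl] at h2; exact absurd h2.symm hd
    · rw [if_neg hk] at h1; exact absurd h1.symm hc
  · have hij' : i < j := hij
    have h1 := congrFun h i
    simp only [Pi.add_apply, Pi.single_apply, if_pos rfl, if_neg hij'.ne, add_zero] at h1
    exact absurd h1 ha
  · have hij' : i < j := hij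
    have h1 := congrFun h i
    simp only [Pi.add_apply, Pi.single_apply, if_pos rfl, if_neg hij'.ne, add_zero] at h1
    rcases eq_or_ne i k with rfl | hik
    · have h2 := congrFun h j
      simp only [Pi.add_apply, Pi.single_apply, if_pos rfl, if_neg hij'.ne',
        zero_add] at h2
      exact absurd h2 hb
    · rw [if_neg hik] at h1; exact absurd h1 ha
  · have hij' : i < j := hij
    have hkl' : k < l := hkl
    have h1 := congrFun h i
    have h2 := congrFun h j
    simp only [Pi.add_apply, Pi.single_apply, if_pos rfl, if_neg hij'.ne, if_neg hij'.ne',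
      add_zero, zero_add] at h1 h2
    rcases eq_or_ne i k with rfl | hik
    · rcases eq_or_ne j l with rfl | hjl
      · simp only [if_true, if_pos rfl, if_neg hij'.ne, if_neg hij'.ne', add_zero, zero_add] at h1 h2
        subst h1; subst h2; rfl
      · rw [if_neg hij'.ne', if_neg hjl, zero_add] at h2
        exact absurd h2 hb
    · rcases eq_or_ne i l with rfl | hil
      · have hjk : j ≠ k := (hkl'.trans hij').ne'
        rw [if_neg hjk, if_neg hij'.ne', zero_add] at h2
        exact absurd h2 hb
      · rw [if_neg hik, if_neg hil, add_zero] at h1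
        exact absurd h1 ha

lemma golayCard : Fintype.card GolayDom = 243 := by
  have h1 : Fintype.card {a : ZMod 3 // a ≠ 0} = 2 := by decide
  have h2 : Fintype.card {p : Fin 11 × Fin 11 // p.1 < p.2} = 55 := by decide
  simp only [Fintype.card_sum, Fintype.card_prod, Fintype.card_unit, Fintype.card_fin, h1, h2]

/-- A formal representation: either `0`, or `a • xᵢ` with `a ≠ 0`, or `a • xᵢ + b • xⱼ` with
`i < j` and `a, b ≠ 0`. Since the nonzero scalars of `GF(3)` are exactly `±1`, these are
precisely the vectors `0`, `±xᵢ`, and `±xᵢ ± xⱼ`; there are `1 + 2·11 + 4·55 = 243` of them. -/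
def golayRepVal (x : Fin 11 → Fin 5 → ZMod 3) :
    Unit ⊕ (Fin 11 × {a : ZMod 3 // a ≠ 0}) ⊕
      ({p : Fin 11 × Fin 11 // p.1 < p.2} × {a : ZMod 3 // a ≠ 0} × {a : ZMod 3 // a ≠ 0}) →
      (Fin 5 → ZMod 3)
  | .inl _ => 0
  | .inr (.inl (i, a)) => (a : ZMod 3) • x i
  | .inr (.inr (p, a, b)) => (a : ZMod 3) • x p.1.1 + (b : ZMod 3) • x p.1.2

/-- If every 4 of the vectors `x₁, …, x₁₁ ∈ GF(3)⁵` are linearly independent, then the 243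
vectors `0`, `±xᵢ`, `±xᵢ ± xⱼ (i < j)` are pairwise distinct (injectivity) and exhaust
`GF(3)⁵` (surjectivity). -/
theorem golay_cosets_exhaust (x : Fin 11 → Fin 5 → ZMod 3)
    (h4 : ∀ s : Finset (Fin 11), s.card = 4 →
      LinearIndependent (ZMod 3) (fun i : s => x i)) :
    Function.Bijective (golayRepVal x) := by
  have hrep : ∀ d, golayRepVal x d = ∑ t, golayCoeff d t • x t := by
    rintro (⟨⟩|⟨i,a,ha⟩|⟨⟨⟨i,j⟩,hij⟩,⟨a,ha⟩,⟨b,hb⟩⟩) <;>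
      simp [golayRepVal, golayCoeff, Pi.single_apply, ite_smul, Finset.sum_ite_eq',
        Finset.sum_add_distrib, add_smul]
  have hsupp : ∀ d : GolayDom, (Finset.univ.filter fun t => golayCoeff d t ≠ 0).card ≤ 2 := by
    rintro (⟨⟩|⟨i,a,ha⟩|⟨⟨⟨i,j⟩,hij⟩,⟨a,ha⟩,⟨b,hb⟩⟩)
    · simp [golayCoeff]
    · calc _ ≤ ({i} : Finset (Fin 11)).card := Finset.card_le_card (by
            intro t ht
            simp only [Finset.mem_filter, golayCoeff, Pi.single_apply] at ht
            simp only [Finset.mem_singleton]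
            by_contra hti
            exact ht.2 (by simp [hti]))
        _ ≤ 2 := by simp
    · calc _ ≤ ({i, j} : Finset (Fin 11)).card := Finset.card_le_card (by
            intro t ht
            simp only [Finset.mem_filter, golayCoeff, Pi.add_apply, Pi.single_apply] at ht
            simp only [Finset.mem_insert, Finset.mem_singleton]
            by_contra hti
            push_neg at hti
            exact ht.2 (by simp [hti.1, hti.2]))
        _ ≤ 2 := by
            apply le_trans (Finset.card_insert_le _ _)
            simp
  have li : ∀ c : Fin 11 → ZMod 3, (Finset.univ.filter fun t => c t ≠ 0).card ≤ 4 →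
      ∑ t, c t • x t = 0 → c = 0 := by
    intro c hc hsum
    obtain ⟨s, hsub, hcard⟩ := Finset.exists_superset_card_eq hc (by simp)
    have hcz : ∀ t ∉ s, c t = 0 := by
      intro t hts
      by_contra h0
      exact hts (hsub (Finset.mem_filter.2 ⟨Finset.mem_univ _, h0⟩))
    have hzero : ∑ t ∈ s, c t • x t = 0 := by
      rw [Finset.sum_subset (Finset.subset_univ s)
        (fun t _ hts => by rw [hcz t hts, zero_smul])]
      exact hsum
    have hli := h4 s hcard
    rw [Fintype.linearIndependent_iff] at hli
    funext t
    by_cases hts : t ∈ s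
    · exact hli (fun i => c i) ((Finset.sum_coe_sort s fun t => c t • x t).trans hzero) ⟨t, hts⟩
    · exact hcz t hts
  have hinj : Function.Injective (golayRepVal x) := by
    intro d e hde
    apply golayCoeff_inj
    have hsum : ∑ t, (golayCoeff d t - golayCoeff e t) • x t = 0 := by
      simp only [sub_smul, Finset.sum_sub_distrib, ← hrep, hde, sub_self]
    have hcard : (Finset.univ.filter fun t => golayCoeff d t - golayCoeff e t ≠ 0).card ≤ 4 := by
      calc _ ≤ ((Finset.univ.filter fun t => golayCoeff d t ≠ 0) ∪
            (Finset.univ.filter fun t => golayCoeff e t ≠ 0)).card :=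
          Finset.card_le_card (by
            intro t ht
            simp only [Finset.mem_filter, Finset.mem_union] at ht ⊢
            rcases eq_or_ne (golayCoeff d t) 0 with h0 | h0
            · exact Or.inr ⟨Finset.mem_univ _, fun h1 => ht.2 (by rw [h0, h1, sub_zero])⟩
            · exact Or.inl ⟨Finset.mem_univ _, h0⟩)
        _ ≤ 2 + 2 := le_trans (Finset.card_union_le _ _) (add_le_add (hsupp d) (hsupp e))
        _ ≤ 4 := by norm_num
    have hce := li _ hcard hsum
    funext t
    have ht := congrFun hce t
    simpa [sub_eq_zero] using ht
  refine (Fintype.bijective_iff_injective_and_card _).2 ⟨hinj, ?_⟩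
  have h5 : Fintype.card (Fin 5 → ZMod 3) = 243 := by
    rw [Fintype.card_fun]
    simp [ZMod.card]
  rw [h5]
  exact golayCard
end

section
/- Let x₁, …, x₁₁ ∈ GF(3)⁵ be such that every 4 of them are linearly independent. Define a graph on the 243 vectors of GF(3)⁵, joining u and v iff u − v = ±xᵢ for some i. Then this graph is strongly regular with parameters (243, 22, 1, 2). -/
open scoped Classical

section BVLS

private def HypX (x : Fin 11 → Fin 5 → ZMod 3) : Prop :=
  ∀ s : Finset (Fin 11), s.card = 4 → LinearIndependent (ZMod 3) (fun i : s => x i)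

variable (x : Fin 11 → Fin 5 → ZMod 3)

private theorem dep4 (h4 : HypX x) {i j k l : Fin 11} {a b c d : ZMod 3}
    (hij : i ≠ j) (hik : i ≠ k) (hil : i ≠ l) (hjk : j ≠ k) (hjl : j ≠ l) (hkl : k ≠ l)
    (h : a • x i + b • x j + c • x k + d • x l = 0) : a = 0 ∧ b = 0 ∧ c = 0 ∧ d = 0 := by
  set s : Finset (Fin 11) := {i, j, k, l} with hs
  have hcard : s.card = 4 := by
    rw [hs]
    rw [Finset.card_insert_of_notMem (by simp [hij, hik, hil]),
        Finset.card_insert_of_notMem (by simp [hjk, hjl]),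
        Finset.card_insert_of_notMem (by simp [hkl]), Finset.card_singleton]
  have li := (Fintype.linearIndependent_iff.mp (h4 s hcard))
  set g : s → ZMod 3 := fun m => if (m : Fin 11) = i then a else if (m : Fin 11) = j then b
    else if (m : Fin 11) = k then c else d with hg
  have hsum : ∑ m : s, g m • x m = a • x i + b • x j + c • x k + d • x l := by
    rw [Finset.sum_coe_sort s (fun m => (if m = i then a else if m = j then b
      else if m = k then c else d) • x m)]
    rw [hs]
    rw [Finset.sum_insert (by simp [hij, hik, hil]),
        Finset.sum_insert (by simp [hjk, hjl]),
        Finset.sum_insert (by simp [hkl]), Finset.sum_singleton]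
    simp [hij.symm, hik.symm, hil.symm, hjk.symm, hjl.symm, hkl.symm, hij, hik, hil, hjk, hjl, hkl]
    abel
  have hz := li g (by rw [hsum, h])
  have ha := hz ⟨i, by simp [hs]⟩
  have hb := hz ⟨j, by simp [hs]⟩
  have hc := hz ⟨k, by simp [hs]⟩
  have hd := hz ⟨l, by simp [hs]⟩
  simp [hg, hij.symm, hik.symm, hil.symm, hjk.symm, hjl.symm, hkl.symm] at ha hb hc hd
  exact ⟨ha, hb, hc, hd⟩

private theorem dep3 (h4 : HypX x) {i j k : Fin 11} {a b c : ZMod 3}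
    (hij : i ≠ j) (hik : i ≠ k) (hjk : j ≠ k)
    (h : a • x i + b • x j + c • x k = 0) : a = 0 ∧ b = 0 ∧ c = 0 := by
  have hne : (({i, j, k} : Finset (Fin 11))ᶜ).Nonempty := by
    rw [← Finset.card_pos, Finset.card_compl]
    have h3 : ({i, j, k} : Finset (Fin 11)).card ≤ 3 := by
      apply (Finset.card_insert_le _ _).trans
      have := (Finset.card_insert_le j ({k} : Finset (Fin 11)))
      simp at this ⊢
      omega
    simp only [Fintype.card_fin]
    omega
  obtain ⟨l, hl⟩ := hne
  simp only [Finset.mem_compl, Finset.mem_insert, Finset.mem_singleton, not_or] at hl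
  obtain ⟨hli, hlj, hlk⟩ := hl
  have := dep4 x h4 hij hik (Ne.symm hli) hjk (Ne.symm hlj) (Ne.symm hlk)
    (a := a) (b := b) (c := c) (d := 0) (by rw [zero_smul, add_zero]; exact h)
  exact ⟨this.1, this.2.1, this.2.2.1⟩

private theorem dep2 (h4 : HypX x) {i j : Fin 11} {a b : ZMod 3} (hij : i ≠ j)
    (h : a • x i + b • x j = 0) : a = 0 ∧ b = 0 := by
  have hne : (({i, j} : Finset (Fin 11))ᶜ).Nonempty := by
    rw [← Finset.card_pos, Finset.card_compl]
    have h2 : ({i, j} : Finset (Fin 11)).card ≤ 2 :=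
      (Finset.card_insert_le _ _).trans (by simp)
    simp only [Fintype.card_fin]
    omega
  obtain ⟨k, hk⟩ := hne
  simp only [Finset.mem_compl, Finset.mem_insert, Finset.mem_singleton, not_or] at hk
  have := dep3 x h4 hij (Ne.symm hk.1) (Ne.symm hk.2) (a := a) (b := b) (c := 0)
    (by rw [zero_smul, add_zero]; exact h)
  exact ⟨this.1, this.2.1⟩

private theorem dep1 (h4 : HypX x) {i : Fin 11} {a : ZMod 3} (h : a • x i = 0) : a = 0 := by
  have hne : (({i} : Finset (Fin 11))ᶜ).Nonempty := by
    rw [← Finset.card_pos, Finset.card_compl]; simp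
  obtain ⟨j, hj⟩ := hne
  simp only [Finset.mem_compl, Finset.mem_singleton] at hj
  exact (dep2 x h4 (Ne.symm hj) (a := a) (b := 0) (by rw [zero_smul, add_zero]; exact h)).1

private theorem key (h4 : HypX x) {i j k l : Fin 11} {a b c d : ZMod 3}
    (hij : i ≠ j) (hkl : k ≠ l) (ha : a ≠ 0) (hb : b ≠ 0) (hc : c ≠ 0) (hd : d ≠ 0)
    (h : a • x i + b • x j = c • x k + d • x l) :
    (i = k ∧ j = l ∧ a = c ∧ b = d) ∨ (i = l ∧ j = k ∧ a = d ∧ b = c) := by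
  by_cases hik : i = k
  · subst hik
    by_cases hjl : j = l
    · subst hjl
      have h' : (a - c) • x i + (b - d) • x j = 0 := by
        linear_combination (norm := module) h
      have := dep2 x h4 hij h'
      exact Or.inl ⟨rfl, rfl, sub_eq_zero.mp this.1, sub_eq_zero.mp this.2⟩
    · exfalso
      have h' : (a - c) • x i + b • x j + (-d) • x l = 0 := by
        linear_combination (norm := module) h
      have := dep3 x h4 hij hkl hjl h'
      exact hb this.2.1
  · by_cases hil : i = l
    · subst hil
      by_cases hjk : j = k
      · subst hjk
        have h' : (a - d) • x i + (b - c) • x j = 0 := by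
          linear_combination (norm := module) h
        have := dep2 x h4 hij h'
        exact Or.inr ⟨rfl, rfl, sub_eq_zero.mp this.1, sub_eq_zero.mp this.2⟩
      · exfalso
        have h' : (a - d) • x i + b • x j + (-c) • x k = 0 := by
          linear_combination (norm := module) h
        exact hb (dep3 x h4 hij (fun e => hik e) hjk h').2.1
    · exfalso
      by_cases hjk : j = k
      · subst hjk
        have h' : a • x i + (b - c) • x j + (-d) • x l = 0 := by
          linear_combination (norm := module) h
        exact ha (dep3 x h4 hij hil hkl h').1
      · by_cases hjl : j = l
        · subst hjl
          have h' : a • x i + (b - d) • x j + (-c) • x k = 0 := by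
            linear_combination (norm := module) h
          exact ha (dep3 x h4 hij hik (fun e => hkl e.symm) h').1
        · have h' : a • x i + b • x j + (-c) • x k + (-d) • x l = 0 := by
            linear_combination (norm := module) h
          exact ha (dep4 x h4 hij hik hil hjk hjl hkl h').1

end BVLS

private def sg (b : Bool) : ZMod 3 := if b then 1 else -1

private def sig (x : Fin 11 → Fin 5 → ZMod 3) (p : Fin 11 × Bool) : Fin 5 → ZMod 3 :=
  sg p.2 • x p.1

private lemma sg_ne (b : Bool) : sg b ≠ 0 := by cases b <;> decide
private lemma sg_cases (b : Bool) : sg b = 1 ∨ sg b = -1 := by cases b <;> simp [sg]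
private lemma sg_inj {b c : Bool} (h : sg b = sg c) : b = c := by
  cases b <;> cases c <;> first | rfl | (exfalso; revert h; decide)
private lemma neg_sg (b : Bool) : -sg b = sg (!b) := by cases b <;> simp [sg]

section BVLS2
variable (x : Fin 11 → Fin 5 → ZMod 3)

private lemma neg_sig (i : Fin 11) (b : Bool) : -sig x (i, b) = sig x (i, !b) := by
  simp only [sig, ← neg_smul, neg_sg]

private lemma sig_ne_zero (h4 : HypX x) (p : Fin 11 × Bool) : sig x p ≠ 0 := by
  intro h
  exact sg_ne p.2 (dep1 x h4 h)

private lemma sig_injective (h4 : HypX x) : Function.Injective (sig x) := by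
  rintro ⟨i, b⟩ ⟨j, c⟩ h
  simp only [sig] at h
  by_cases hij : i = j
  · subst hij
    have h' : (sg b - sg c) • x i = 0 := by linear_combination (norm := module) h
    exact Prod.ext rfl (sg_inj (sub_eq_zero.mp (by simpa using dep1 x h4 h')))
  · exfalso
    have h' : sg b • x i + (-sg c) • x j = 0 := by linear_combination (norm := module) h
    exact sg_ne b (dep2 x h4 hij h').1

private lemma sig_or_iff (d : Fin 5 → ZMod 3) :
    (∃ i, d = x i ∨ d = -x i) ↔ ∃ p, d = sig x p := by
  constructor
  · rintro ⟨i, h | h⟩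
    · exact ⟨(i, true), by simpa [sig, sg] using h⟩
    · exact ⟨(i, false), by simpa [sig, sg] using h⟩
  · rintro ⟨⟨i, b⟩, h⟩
    cases b
    · exact ⟨i, Or.inr (by simpa [sig, sg] using h)⟩
    · exact ⟨i, Or.inl (by simpa [sig, sg] using h)⟩

private lemma adj_iff (v w : Fin 5 → ZMod 3) :
    (SimpleGraph.fromRel
        (fun u v : Fin 5 → ZMod 3 => ∃ i : Fin 11, u - v = x i ∨ u - v = -x i)).Adj v w ↔
      v ≠ w ∧ ∃ p, v - w = sig x p := by
  rw [SimpleGraph.fromRel_adj]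
  refine and_congr_right fun hne => ?_
  rw [← sig_or_iff]
  constructor
  · rintro (⟨i, h | h⟩ | ⟨i, h | h⟩)
    · exact ⟨i, Or.inl h⟩
    · exact ⟨i, Or.inr h⟩
    · exact ⟨i, Or.inr (by rw [← neg_sub, h])⟩
    · exact ⟨i, Or.inl (by rw [← neg_sub, h, neg_neg])⟩
  · exact Or.inl

set_option maxRecDepth 10000 in
private lemma rep_exists (h4 : HypX x) {u : Fin 5 → ZMod 3} (hu0 : u ≠ 0)
    (huS : ∀ p, u ≠ sig x p) :
    ∃ p q : Fin 11 × Bool, p.1 < q.1 ∧ u = sig x p + sig x q := by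
  set P : Finset ((Fin 11 × Bool) × (Fin 11 × Bool)) :=
    Finset.univ.filter (fun q => q.1.1 < q.2.1) with hP
  have hPcard : P.card = 220 := by decide
  set φ : ((Fin 11 × Bool) × (Fin 11 × Bool)) → (Fin 5 → ZMod 3) :=
    fun q => sig x q.1 + sig x q.2 with hφ
  have hinj : Set.InjOn φ P := by
    rintro ⟨⟨i, b⟩, ⟨j, c⟩⟩ hq ⟨⟨k, e⟩, ⟨l, f⟩⟩ hq' h
    simp only [hP, Finset.coe_filter, Set.mem_setOf_eq] at hq hq'
    have hij : i ≠ j := ne_of_lt hq.2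
    have hkl : k ≠ l := ne_of_lt hq'.2
    have h' : sg b • x i + sg c • x j = sg e • x k + sg f • x l := h
    rcases key x h4 hij hkl (sg_ne b) (sg_ne c) (sg_ne e) (sg_ne f) h' with
      ⟨h1, h2, h3, h4'⟩ | ⟨h1, h2, h3, h4'⟩
    · subst h1; subst h2
      rw [sg_inj h3, sg_inj h4']
    · exfalso
      subst h1; subst h2
      exact absurd (hq.2.trans hq'.2) (lt_irrefl _)
  have hsub : P.image φ ⊆ (insert 0 (Finset.image (sig x) Finset.univ))ᶜ := by
    intro d hd
    rw [Finset.mem_image] at hd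
    obtain ⟨⟨⟨i, b⟩, ⟨j, c⟩⟩, hq, rfl⟩ := hd
    simp only [hP, Finset.mem_filter] at hq
    have hij : i ≠ j := ne_of_lt hq.2
    rw [Finset.mem_compl, Finset.mem_insert]
    push_neg
    constructor
    · intro h0
      have h' : sg b • x i + sg c • x j = 0 := h0
      exact sg_ne b (dep2 x h4 hij h').1
    · rw [Finset.mem_image]
      rintro ⟨⟨k, e⟩, -, hk⟩
      have h' : sg b • x i + sg c • x j = sg e • x k := hk.symm
      by_cases hki : k = i
      · subst hki
        have h'' : (sg b - sg e) • x k + sg c • x j = 0 := by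
          linear_combination (norm := module) h'
        exact sg_ne c (dep2 x h4 hij h'').2
      · by_cases hkj : k = j
        · subst hkj
          have h'' : sg b • x i + (sg c - sg e) • x k = 0 := by
            linear_combination (norm := module) h'
          exact sg_ne b (dep2 x h4 hij h'').1
        · have h'' : sg b • x i + sg c • x j + (-sg e) • x k = 0 := by
            linear_combination (norm := module) h'
          exact sg_ne b (dep3 x h4 hij (fun hh => hki hh.symm) (fun hh => hkj hh.symm) h'').1
  have hScard : (Finset.image (sig x) Finset.univ).card = 22 := by
    rw [Finset.card_image_of_injective _ (sig_injective x h4), Finset.card_univ]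
    simp
  have hIcard : (insert (0 : Fin 5 → ZMod 3) (Finset.image (sig x) Finset.univ)).card = 23 := by
    rw [Finset.card_insert_of_notMem, hScard]
    rw [Finset.mem_image]
    rintro ⟨p, -, hp⟩
    exact sig_ne_zero x h4 p hp
  have hNcard : ((insert (0 : Fin 5 → ZMod 3) (Finset.image (sig x) Finset.univ))ᶜ).card = 220 := by
    rw [Finset.card_compl, hIcard]
    have : Fintype.card (Fin 5 → ZMod 3) = 243 := by simp
    omega
  have hicard : (P.image φ).card = 220 := by
    rw [Finset.card_image_of_injOn hinj, hPcard]
  have heq : P.image φ = (insert 0 (Finset.image (sig x) Finset.univ))ᶜ :=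
    Finset.eq_of_subset_of_card_le hsub (by rw [hNcard, hicard])
  have hu : u ∈ P.image φ := by
    rw [heq, Finset.mem_compl, Finset.mem_insert]
    push_neg
    refine ⟨hu0, ?_⟩
    rw [Finset.mem_image]
    rintro ⟨p, -, hp⟩
    exact huS p hp.symm
  rw [Finset.mem_image] at hu
  obtain ⟨q, hqP, hq⟩ := hu
  simp only [hP, Finset.mem_filter] at hqP
  exact ⟨q.1, q.2, hqP.2, hq.symm⟩

end BVLS2

section BVLS3
variable (x : Fin 11 → Fin 5 → ZMod 3)

private abbrev GG : SimpleGraph (Fin 5 → ZMod 3) :=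
  SimpleGraph.fromRel (fun u v : Fin 5 → ZMod 3 => ∃ i : Fin 11, u - v = x i ∨ u - v = -x i)

private lemma deg22 (h4 : HypX x) (v : Fin 5 → ZMod 3) : (GG x).degree v = 22 := by
  have hnf : (GG x).neighborFinset v = Finset.image (fun p => v - sig x p) Finset.univ := by
    ext u
    simp only [SimpleGraph.mem_neighborFinset, Finset.mem_image, Finset.mem_univ, true_and]
    rw [adj_iff]
    constructor
    · rintro ⟨hne, p, hp⟩
      exact ⟨p, by rw [← hp]; abel⟩
    · rintro ⟨p, hp⟩
      refine ⟨?_, p, by rw [← hp]; abel⟩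
      intro he
      apply sig_ne_zero x h4 p
      rw [← hp] at he
      have : v - (v - sig x p) = 0 := by rw [← he]; abel
      rw [← this]; abel
  rw [SimpleGraph.degree, hnf, Finset.card_image_of_injective, Finset.card_univ]
  · simp
  · intro a b h
    exact sig_injective x h4 (by rwa [sub_right_inj] at h)

private lemma card_common_adj (h4 : HypX x) {v w : Fin 5 → ZMod 3}
    (hadj : (GG x).Adj v w) : Fintype.card ((GG x).commonNeighbors v w) = 1 := by
  rw [adj_iff] at hadj
  obtain ⟨hne, ⟨i, b⟩, hp⟩ := hadj
  simp only [sig] at hp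
  have hclass : ∀ u, u ∈ (GG x).commonNeighbors v w ↔ u = v + sg b • x i := by
    intro u
    rw [SimpleGraph.mem_commonNeighbors, adj_iff, adj_iff]
    constructor
    · rintro ⟨⟨hvu, ⟨j, c⟩, hq⟩, ⟨hwu, ⟨k, e⟩, hr⟩⟩
      simp only [sig] at hq hr
      by_cases hjk : j = k
      · subst hjk
        by_cases hij' : i = j
        · subst hij'
          have hcoef : (sg c - sg e - sg b) • x i = 0 := by
            linear_combination (norm := module) -hq + hr + hp
          have hc0 := dep1 x h4 hcoef
          have hb' : sg b = -sg c := by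
            rcases sg_cases c with h1 | h1 <;> rcases sg_cases e with h2 | h2 <;>
              rcases sg_cases b with h3 | h3 <;> simp only [h1, h2, h3] at hc0 ⊢ <;>
              first | decide | (exact absurd hc0 (by decide))
          rw [hb']
          linear_combination (norm := module) -hq
        · exfalso
          have h' : (sg c - sg e) • x j + (-sg b) • x i = 0 := by
            linear_combination (norm := module) -hq + hr + hp
          exact sg_ne b (neg_eq_zero.mp (dep2 x h4 (fun h => hij' h.symm) h').2)
      · exfalso
        by_cases hij' : i = j
        · subst hij'
          have h' : (sg c - sg b) • x i + (-sg e) • x k = 0 := by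
            linear_combination (norm := module) -hq + hr + hp
          exact sg_ne e (neg_eq_zero.mp (dep2 x h4 hjk h').2)
        · by_cases hik' : i = k
          · subst hik'
            have h' : sg c • x j + (-sg e - sg b) • x i = 0 := by
              linear_combination (norm := module) -hq + hr + hp
            exact sg_ne c (dep2 x h4 hjk h').1
          · have h' : sg c • x j + (-sg e) • x k + (-sg b) • x i = 0 := by
              linear_combination (norm := module) -hq + hr + hp
            exact sg_ne c (dep3 x h4 hjk (fun h => hij' h.symm) (fun h => hik' h.symm) h').1
    · rintro rfl
      have hcoe : ∀ a : ZMod 3, -a - a = a := by decide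
      have hwu : w - (v + sg b • x i) = (-sg b - sg b) • x i := by
        linear_combination (norm := module) -hp
      rw [hcoe] at hwu
      refine ⟨⟨?_, (i, !b), ?_⟩, ⟨?_, (i, b), hwu⟩⟩
      · intro h
        apply sg_ne b
        apply dep1 x h4 (a := sg b)
        have : v - (v + sg b • x i) = 0 := by rw [← h]; abel
        have h2 : -(sg b • x i) = 0 := by rw [← this]; abel
        rw [← neg_neg (sg b • x i), h2, neg_zero]
      · rw [← neg_sig]
        show v - (v + sg b • x i) = -(sg b • x i)
        abel
      · intro h
        rw [h, sub_self] at hwu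
        exact sg_ne b (dep1 x h4 hwu.symm)
  rw [← Set.toFinset_card]
  have hset : ((GG x).commonNeighbors v w).toFinset = {v + sg b • x i} := by
    ext u
    simp only [Set.mem_toFinset, Finset.mem_singleton]
    exact hclass u
  rw [hset, Finset.card_singleton]

private lemma card_common_nonadj (h4 : HypX x) {v w : Fin 5 → ZMod 3}
    (hne : v ≠ w) (hnadj : ¬ (GG x).Adj v w) :
    Fintype.card ((GG x).commonNeighbors v w) = 2 := by
  have huS : ∀ p, v - w ≠ sig x p := by
    intro p hp
    exact hnadj ((adj_iff x v w).mpr ⟨hne, p, hp⟩)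
  have hu0 : v - w ≠ 0 := sub_ne_zero.mpr hne
  obtain ⟨⟨i, b⟩, ⟨j, c⟩, hlt, hrep⟩ := rep_exists x h4 hu0 huS
  simp only [sig] at hrep
  have hij : i ≠ j := ne_of_lt hlt
  have hclass : ∀ u, u ∈ (GG x).commonNeighbors v w ↔
      u = v - sg b • x i ∨ u = v - sg c • x j := by
    intro u
    rw [SimpleGraph.mem_commonNeighbors, adj_iff, adj_iff]
    constructor
    · rintro ⟨⟨hvu, ⟨k, e⟩, hq⟩, ⟨hwu, ⟨l, f⟩, hr⟩⟩
      simp only [sig] at hq hr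
      by_cases hkl : k = l
      · exfalso
        subst hkl
        have hvw2 : v - w = (sg e - sg f) • x k := by
          linear_combination (norm := module) hq - hr
        rcases sg_cases e with h1 | h1 <;> rcases sg_cases f with h2 | h2 <;>
            rw [h1, h2] at hvw2
        · rw [show ((1 : ZMod 3) - 1) = 0 by decide, zero_smul] at hvw2
          exact hu0 hvw2
        · rw [show ((1 : ZMod 3) - -1) = -1 by decide] at hvw2
          exact huS (k, false) hvw2
        · rw [show ((-1 : ZMod 3) - 1) = 1 by decide] at hvw2
          exact huS (k, true) (by simpa [sig, sg] using hvw2)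
        · rw [show ((-1 : ZMod 3) - -1) = 0 by decide, zero_smul] at hvw2
          exact hu0 hvw2
      · have hkey : sg e • x k + (-sg f) • x l = sg b • x i + sg c • x j := by
          linear_combination (norm := module) -hq + hr + hrep
        rcases key x h4 hkl hij (sg_ne e) (neg_ne_zero.mpr (sg_ne f)) (sg_ne b) (sg_ne c)
            hkey with ⟨h1, h2, h3, h4'⟩ | ⟨h1, h2, h3, h4'⟩
        · left
          subst h1
          rw [← h3]
          linear_combination (norm := module) -hq
        · right
          subst h1
          rw [← h3]
          linear_combination (norm := module) -hq
    · have hcoe : ∀ a : ZMod 3, -a - a = a := by decide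
      rintro (rfl | rfl)
      · have hwu : w - (v - sg b • x i) = (-sg c) • x j := by
          linear_combination (norm := module) -hrep
        refine ⟨⟨?_, (i, b), by abel⟩, ⟨?_, (j, !c), ?_⟩⟩
        · intro h
          apply sg_ne b
          apply dep1 x h4 (a := sg b)
          have : v - (v - sg b • x i) = 0 := by rw [← h]; abel
          rw [← this]; abel
        · intro h
          rw [h, sub_self] at hwu
          exact sg_ne c (neg_eq_zero.mp (dep1 x h4 hwu.symm))
        · rw [← neg_sig]
          show w - (v - sg b • x i) = -(sg c • x j)
          rw [hwu]
          module
      · have hwu : w - (v - sg c • x j) = (-sg b) • x i := by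
          linear_combination (norm := module) -hrep
        refine ⟨⟨?_, (j, c), by abel⟩, ⟨?_, (i, !b), ?_⟩⟩
        · intro h
          apply sg_ne c
          apply dep1 x h4 (a := sg c)
          have : v - (v - sg c • x j) = 0 := by rw [← h]; abel
          rw [← this]; abel
        · intro h
          rw [h, sub_self] at hwu
          exact sg_ne b (neg_eq_zero.mp (dep1 x h4 hwu.symm))
        · rw [← neg_sig]
          show w - (v - sg c • x j) = -(sg b • x i)
          rw [hwu]
          module
  have hc12 : v - sg b • x i ≠ v - sg c • x j := by
    intro h
    rw [sub_right_inj] at h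
    have : sg b • x i + (-sg c) • x j = 0 := by linear_combination (norm := module) h
    exact sg_ne b (dep2 x h4 hij this).1
  rw [← Set.toFinset_card]
  have hset : ((GG x).commonNeighbors v w).toFinset = {v - sg b • x i, v - sg c • x j} := by
    ext u
    simp only [Set.mem_toFinset, Finset.mem_insert, Finset.mem_singleton]
    exact hclass u
  rw [hset, Finset.card_insert_of_notMem (by simp [hc12]), Finset.card_singleton]

end BVLS3

open scoped Classical in
/-- If every 4 of the vectors `x₁, …, x₁₁ ∈ GF(3)⁵` are linearly independent, then the graph
on `GF(3)⁵` joining `u` and `v` iff `u − v = ±xᵢ` for some `i` is strongly regular with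
parameters `(243, 22, 1, 2)` (the Berlekamp–Van Lint–Seidel graph). -/
theorem berlekamp_vanLint_seidel_isSRG (x : Fin 11 → Fin 5 → ZMod 3)
    (h4 : ∀ s : Finset (Fin 11), s.card = 4 →
      LinearIndependent (ZMod 3) (fun i : s => x i)) :
    (SimpleGraph.fromRel
        (fun u v : Fin 5 → ZMod 3 => ∃ i : Fin 11, u - v = x i ∨ u - v = -x i)).IsSRGWith
      243 22 1 2 := by
  refine ⟨by simp, fun v => deg22 x h4 v, fun v w h => card_common_adj x h4 h,
    fun v w hne h => card_common_nonadj x h4 hne h⟩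
end
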